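/- Let r ≥ 1 and let t be a tree over a ranked alphabet extended by parameter symbols (parameters label leaves only and are not counted in the size |t|), such that |t| ≥ 2 and every node of t has at most r children. Then there exists a node v of t such that |t|/(2(r+2)) ≤ |t[v]| ≤ ((r+1)/(r+2))·|t|, where t[v] denotes the subtree of t rooted at v and |t[v]| counts its non-parameter nodes. -/

import Mathlib

universe u v

/-- Finite rooted ordered labelled trees. -/
inductive RTree (L : Type u) : Type u
  | node : L → List (RTree L) → RTree L

namespace RTree

/-- The number of nodes of a tree. -/
def size {L : Type u} : RTree L → ℕ
  | .node _ ts => 1 + (ts.attach.map (fun x => x.1.size)).sum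
termination_by t => sizeOf t
decreasing_by simp_wf; have := List.sizeOf_lt_of_mem x.2; omega

/-- The list of labels of the nodes of a tree. -/
def labelsList {L : Type u} : RTree L → List L
  | .node f ts => f :: (ts.attach.map (fun x => x.1.labelsList)).flatten
termination_by t => sizeOf t
decreasing_by simp_wf; have := List.sizeOf_lt_of_mem x.2; omega

/-- The depth of a tree: the maximal number of edges on a path from the root
to a leaf. -/
def depth {L : Type u} : RTree L → ℕ
  | .node _ ts => (ts.attach.map (fun x => x.1.depth + 1)).foldr max 0
termination_by t => sizeOf t
decreasing_by simp_wf; have := List.sizeOf_lt_of_mem x.2; omega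

/-- `Subtree s t` holds iff `s` is the subtree of `t` rooted at some node
of `t`. -/
inductive Subtree {L : Type u} : RTree L → RTree L → Prop
  | refl (t : RTree L) : Subtree t t
  | child {s t : RTree L} {f : L} {ts : List (RTree L)} :
      t ∈ ts → Subtree s t → Subtree s (.node f ts)

/-- A tree is well-formed over a ranked alphabet if every node labelled by a
symbol of rank `k` has exactly `k` children. -/
inductive WF {L : Type u} (rk : L → ℕ) : RTree L → Prop
  | node {f : L} {ts : List (RTree L)} :
      ts.length = rk f → (∀ t ∈ ts, WF rk t) → WF rk (.node f ts)

end RTree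

namespace RTree

/-- Number of non-parameter nodes of a tree whose leaves may be labelled with
parameters (the right summand `ℕ` is the set of parameter symbols). -/
def psize {L : Type u} : RTree (L ⊕ ℕ) → ℕ
  | .node (Sum.inl _) ts => 1 + (ts.attach.map (fun x => x.1.psize)).sum
  | .node (Sum.inr _) ts => (ts.attach.map (fun x => x.1.psize)).sum
termination_by t => sizeOf t
decreasing_by all_goals (simp_wf; have := List.sizeOf_lt_of_mem x.2; omega)

end RTree

/-! Descend from the root along children of size greater than `B = (r+1)/(r+2) · |t|` until
reaching a node `u` all of whose children have size at most `B`. The node `u` has at most `r`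
children and `|u| ≤ 1 + Σ |c|`, so if every child had size below `|t|/(2(r+2))` we would get
`B < |u| ≤ 1 + r |t|/(2(r+2))`, which forces `|t| < 2`. -/

namespace RTree

variable {L : Type u}

theorem Subtree.trans {s t w : RTree L} (hst : s.Subtree t) (htw : t.Subtree w) :
    s.Subtree w := by
  induction htw with
  | refl => exact hst
  | child hc _ ih => exact .child hc ih

theorem labelsList_node (f : L) (ts : List (RTree L)) :
    (node f ts).labelsList = f :: (ts.map labelsList).flatten := by
  rw [labelsList, List.map_attach_eq_pmap, List.pmap_eq_map]

theorem labelsList_subset_of_mem {f : L} {ts : List (RTree L)} {c : RTree L} (hc : c ∈ ts) :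
    c.labelsList ⊆ (node f ts).labelsList := by
  rw [labelsList_node]
  exact fun _ hx => List.mem_cons_of_mem _ (List.mem_flatten_of_mem (List.mem_map_of_mem hc) hx)

theorem Subtree.length_le_of_rank_le {rk : L → ℕ} {r : ℕ} {t : RTree L} {f : L}
    {ts : List (RTree L)} (hs : (node f ts).Subtree t) (hwf : t.WF rk)
    (hrank : ∀ l ∈ t.labelsList, rk l ≤ r) : ts.length ≤ r := by
  generalize hu : node f ts = u at hs
  induction hs with
  | refl =>
    subst hu
    obtain ⟨hlen, -⟩ := hwf
    exact hlen ▸ hrank f (by simp [labelsList_node])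
  | child hc _ ih =>
    obtain ⟨-, hwfc⟩ := hwf
    exact ih (hwfc _ hc) fun l hl => hrank l (labelsList_subset_of_mem hc hl)

theorem exists_subtree_forall_children_not (P : RTree L → Prop) :
    ∀ t : RTree L, P t → ∃ f ts, (node f ts).Subtree t ∧ P (node f ts) ∧ ∀ c ∈ ts, ¬ P c
  | node f ts, ht => by
    by_cases h : ∃ c ∈ ts, P c
    · obtain ⟨c, hc, hPc⟩ := h
      obtain ⟨g, us, hs, hP, hmin⟩ := exists_subtree_forall_children_not P c hPc
      exact ⟨g, us, .child hc hs, hP, hmin⟩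
    · exact ⟨f, ts, .refl _, ht, fun c hc hPc => h ⟨c, hc, hPc⟩⟩

theorem psize_node_le (l : L ⊕ ℕ) (ts : List (RTree (L ⊕ ℕ))) :
    (node l ts).psize ≤ 1 + (ts.map psize).sum := by
  rcases l with f | p <;> simp [psize]

theorem psize_node_le_one_add_length_mul {l : L ⊕ ℕ} {ts : List (RTree (L ⊕ ℕ))} {M : ℝ}
    (h : ∀ c ∈ ts, (c.psize : ℝ) ≤ M) : ((node l ts).psize : ℝ) ≤ 1 + ts.length * M := by
  have hsum : ((ts.map psize).sum : ℝ) ≤ ts.length * M := by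
    rw [Nat.cast_list_sum, List.map_map]
    simpa using List.sum_le_card_nsmul (ts.map (Nat.cast ∘ psize)) M (by simpa using h)
  calc ((node l ts).psize : ℝ) ≤ 1 + (ts.map psize).sum := by exact_mod_cast psize_node_le l ts
    _ ≤ 1 + ts.length * M := by linarith

end RTree

theorem exists_balanced_split (L : Type) (rkL : L → ℕ) (r : ℕ)
    (t : RTree (L ⊕ ℕ))
    (hwf : t.WF (fun l => match l with | Sum.inl f => rkL f | Sum.inr _ => 0))
    (hrank : ∀ l ∈ t.labelsList,
      (match l with | Sum.inl f => rkL f | Sum.inr _ => 0) ≤ r)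
    (hsize : 2 ≤ t.psize) :
    ∃ s : RTree (L ⊕ ℕ), s.Subtree t ∧
      (t.psize : ℝ) / (2 * (r + 2)) ≤ (s.psize : ℝ) ∧
      (s.psize : ℝ) ≤ ((r : ℝ) + 1) / ((r : ℝ) + 2) * (t.psize : ℝ) := by
  have hn : (2 : ℝ) ≤ t.psize := by exact_mod_cast hsize
  have hr : (0 : ℝ) < r + 2 := by positivity
  have hroot : ((r : ℝ) + 1) / (r + 2) * t.psize < t.psize := by
    rw [div_mul_eq_mul_div, div_lt_iff₀ hr]; linarith
  obtain ⟨l, ts, hu, hheavy, hlight⟩ := RTree.exists_subtree_forall_children_not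
    (fun s => ((r : ℝ) + 1) / (r + 2) * t.psize < s.psize) t hroot
  suffices ∃ c ∈ ts, (t.psize : ℝ) / (2 * (r + 2)) ≤ c.psize by
    obtain ⟨c, hc, hlow⟩ := this
    exact ⟨c, (RTree.Subtree.child hc (.refl c)).trans hu, hlow, not_lt.1 (hlight c hc)⟩
  by_contra! hsmall
  have hlen : (ts.length : ℝ) ≤ r := by exact_mod_cast hu.length_le_of_rank_le hwf hrank
  have hupper : ((RTree.node l ts).psize : ℝ) ≤ 1 + r * (t.psize / (2 * (r + 2))) :=
    (RTree.psize_node_le_one_add_length_mul fun c hc => (hsmall c hc).le).trans (by gcongr)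
  have hcontra := hheavy.trans_le hupper
  field_simp at hcontra
  nlinarith
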